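/- The quaternions with the slice topology, (ℍ, τ_s), form a path-connected topological space. -/

import Mathlib

open scoped Quaternion Topology

/-- The slice `ℂ_I = ℝ + ℝI` inside the quaternions. -/
def qslice (I : ℍ[ℝ]) : Set ℍ[ℝ] := {q | ∃ x y : ℝ, q = (x : ℍ[ℝ]) + y • I}

/-- The slice topology on `ℍ`. -/
noncomputable def sliceTopology : TopologicalSpace ℍ[ℝ] :=
  ⨆ I ∈ {I : ℍ[ℝ] | I ^ 2 = -1},
    TopologicalSpace.coinduced (Subtype.val : qslice I → ℍ[ℝ]) inferInstance

/-! Every quaternion `q` lies in a slice: `q = re q + ‖im q‖ • I` with `I` the unit vector along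
`im q`. Each slice is a continuous image of `ℝ²` for `τ_s`, hence path connected, and contains `0`;
so any two quaternions are joined through `0`. -/

theorem exists_sq_eq_neg_one : ∃ I : ℍ[ℝ], I ^ 2 = -1 := by
  -- `⟨0, 1, 0, 0⟩` alone elaborates in `ℍ[ℝ,-1,-1]`, where the simp lemmas for `ℍ[ℝ]` do not fire.
  obtain ⟨I, hre, hi, hj, hk⟩ : ∃ I : ℍ[ℝ], I.re = 0 ∧ I.imI = 1 ∧ I.imJ = 0 ∧ I.imK = 0 :=
    ⟨⟨0, 1, 0, 0⟩, rfl, rfl, rfl, rfl⟩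
  exact ⟨I, by ext <;> simp [sq, hre, hi, hj, hk]⟩

theorem inv_norm_smul_im_sq {q : ℍ[ℝ]} (h : q.im ≠ 0) : (‖q.im‖⁻¹ • q.im) ^ 2 = -1 := by
  rw [smul_pow, Quaternion.im_sq, Quaternion.normSq_eq_norm_mul_self, smul_neg, ← sq,
    ← Quaternion.coe_smul, smul_eq_mul, ← mul_pow, inv_mul_cancel₀ (norm_ne_zero_iff.mpr h),
    one_pow, Quaternion.coe_one]

theorem zero_mem_qslice (I : ℍ[ℝ]) : (0 : ℍ[ℝ]) ∈ qslice I :=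
  ⟨0, 0, by simp⟩

theorem exists_sq_eq_neg_one_mem_qslice (q : ℍ[ℝ]) :
    ∃ I : ℍ[ℝ], I ^ 2 = -1 ∧ q ∈ qslice I := by
  by_cases him : q.im = 0
  · obtain ⟨I, hI⟩ := exists_sq_eq_neg_one
    exact ⟨I, hI, q.re, 0, by simpa [him] using q.re_add_im.symm⟩
  · refine ⟨‖q.im‖⁻¹ • q.im, inv_norm_smul_im_sq him, q.re, ‖q.im‖, ?_⟩
    rw [smul_smul, mul_inv_cancel₀ (norm_ne_zero_iff.mpr him), one_smul, q.re_add_im]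

theorem qslice_eq_range (I : ℍ[ℝ]) :
    qslice I = Set.range fun p : ℝ × ℝ => (p.1 : ℍ[ℝ]) + p.2 • I := by
  ext q
  simp [qslice, eq_comm]

theorem continuous_subtype_val_qslice {I : ℍ[ℝ]} (hI : I ^ 2 = -1) :
    Continuous[_, sliceTopology] (Subtype.val : qslice I → ℍ[ℝ]) := by
  rw [continuous_iff_coinduced_le, sliceTopology]
  exact le_iSup₂ (f := fun J (_ : J ∈ {J : ℍ[ℝ] | J ^ 2 = -1}) =>
    TopologicalSpace.coinduced (Subtype.val : qslice J → ℍ[ℝ]) inferInstance) I hI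

theorem isPathConnected_qslice {I : ℍ[ℝ]} (hI : I ^ 2 = -1) :
    @IsPathConnected ℍ[ℝ] sliceTopology (qslice I) := by
  have hparam : Continuous fun p : ℝ × ℝ => (⟨p.1 + p.2 • I, p.1, p.2, rfl⟩ : qslice I) :=
    ((Quaternion.continuous_coe.comp continuous_fst).add
      (continuous_snd.smul continuous_const)).subtype_mk _
  exact qslice_eq_range I ▸ @isPathConnected_range _ _ _ sliceTopology _ _
    (@Continuous.comp _ _ _ _ _ sliceTopology _ _ (continuous_subtype_val_qslice hI) hparam)

/-- `(ℍ, τ_s)` is a path-connected topological space. -/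
theorem sliceTopology_pathConnected :
    @PathConnectedSpace ℍ[ℝ] sliceTopology := by
  let := sliceTopology
  have joined_zero (q : ℍ[ℝ]) : Joined 0 q := by
    obtain ⟨I, hI, hq⟩ := exists_sq_eq_neg_one_mem_qslice q
    exact ((isPathConnected_qslice hI).joinedIn 0 (zero_mem_qslice I) q hq).joined
  exact ⟨⟨0⟩, fun x y => (joined_zero x).symm.trans (joined_zero y)⟩
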